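/- (Theorem 2) Let k, m ≥ 1, ω₀ > 0. Let A = M ⊗ I_k where M is the real 3×3 matrix with rows (−3, 1, 0), (−3, 0, 1), (−1, 0, 0), let C₁ = e₂ ⊗ I_k and C₂ = e₃ ⊗ I_k ∈ ℝ^{3k×k} (e₂, e₃ the second and third standard basis column vectors of ℝ³), and let P ∈ ℝ^{3k×3k} be symmetric positive definite with Aᵀ P + P A = −I_{3k}. Let Γ ∈ ℝ^{m×m} be symmetric positive definite. Suppose η : [0, ∞) → ℝ^{3k}, θ̃ : [0, ∞) → ℝ^m are differentiable and B : [0, ∞) → ℝ^{k×m}, g, h, x₃ : [0, ∞) → ℝ^k satisfy, for all t ≥ 0: η̇(t) = ω₀ A η(t) + (1/ω₀) C₁ (g(t) + B(t) θ̃(t)) + (1/ω₀²) C₂ h(t); the adaptation inequality θ̃(t)ᵀ ( Γ⁻¹ θ̃̇(t) + (1/ω₀) B(t)ᵀ C₁ᵀ P (η(t) − (1/ω₀²) C₂ x₃(t)) ) ≤ 0; and the bounds ‖g(t)‖ ≤ ũ_b, ‖h(t)‖ ≤ h_b, ‖B(t)‖ ≤ e_b, ‖x₃(t)‖ ≤ d_b,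 ‖θ̃(t)‖ ≤ θ̃_b. Then the estimation error η is bounded: there exists a constant C ≥ 0 such that ‖η(t)‖ ≤ C for all t ≥ 0. -/

import Mathlib

open Matrix
open scoped Kronecker

/-- The ESO error-dynamics system matrix (before Kronecker lifting). -/
noncomputable def M : Matrix (Fin 3) (Fin 3) ℝ :=
  !![-3, 1, 0; -3, 0, 1; -1, 0, 0]

/-- `C₁ = e₂ ⊗ I_k ∈ ℝ^{3k×k}`, where `e₂` is the second standard basis column vector
of `ℝ³` (indices `0, 1, 2`). -/
noncomputable def C1 (k : ℕ) : Matrix (Fin 3 × Fin k) (Fin k) ℝ :=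
  Matrix.of fun p j =>
    (if p.1 = 1 then (1 : ℝ) else 0) * (1 : Matrix (Fin k) (Fin k) ℝ) p.2 j

/-- `C₂ = e₃ ⊗ I_k ∈ ℝ^{3k×k}`, where `e₃` is the third standard basis column vector
of `ℝ³` (indices `0, 1, 2`). -/
noncomputable def C2 (k : ℕ) : Matrix (Fin 3 × Fin k) (Fin k) ℝ :=
  Matrix.of fun p j =>
    (if p.1 = 2 then (1 : ℝ) else 0) * (1 : Matrix (Fin k) (Fin k) ℝ) p.2 j

/-- Euclidean norm of a finitely-indexed real vector. -/
noncomputable def eucNorm {n : Type*} [Fintype n] (v : n → ℝ) : ℝ :=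
  ‖(EuclideanSpace.equiv n ℝ).symm v‖

/-- Operator norm (Euclidean → Euclidean) of a real matrix. -/
noncomputable def opNorm {m n : Type*} [Fintype m] [Fintype n] [DecidableEq n]
    (A : Matrix m n ℝ) : ℝ :=
  ‖LinearMap.toContinuousLinearMap (Matrix.toEuclideanLin A)‖

/- ######################## auxiliary lemmas ######################## -/

lemma eucNorm_nonneg {n : Type*} [Fintype n] (v : n → ℝ) : 0 ≤ eucNorm v :=
  norm_nonneg _

lemma opNorm_nonneg {m n : Type*} [Fintype m] [Fintype n] [DecidableEq n]
    (A : Matrix m n ℝ) : 0 ≤ opNorm A :=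
  norm_nonneg _

lemma eucNorm_add_le {n : Type*} [Fintype n] (v w : n → ℝ) :
    eucNorm (v + w) ≤ eucNorm v + eucNorm w := by
  unfold eucNorm
  rw [map_add]
  exact norm_add_le _ _

lemma eucNorm_smul {n : Type*} [Fintype n] (c : ℝ) (v : n → ℝ) :
    eucNorm (c • v) = |c| * eucNorm v := by
  unfold eucNorm
  rw [_root_.map_smul, norm_smul, Real.norm_eq_abs]

lemma mulVec_eucNorm_le {m n : Type*} [Fintype m] [Fintype n] [DecidableEq n]
    (A : Matrix m n ℝ) (v : n → ℝ) :
    eucNorm (A *ᵥ v) ≤ opNorm A * eucNorm v := by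
  have := (LinearMap.toContinuousLinearMap (Matrix.toEuclideanLin A)).le_opNorm
    ((EuclideanSpace.equiv n ℝ).symm v)
  simpa [eucNorm, opNorm, Matrix.toEuclideanLin_apply] using this

lemma dotProduct_eq_inner {n : Type*} [Fintype n] (v w : n → ℝ) :
    v ⬝ᵥ w = inner ℝ ((EuclideanSpace.equiv n ℝ).symm v) ((EuclideanSpace.equiv n ℝ).symm w) := by
  simp only [dotProduct, PiLp.inner_apply, RCLike.inner_apply, starRingEnd_apply]
  exact Finset.sum_congr rfl fun i _ => by rw [star_trivial]; exact mul_comm _ _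

lemma abs_dotProduct_le {n : Type*} [Fintype n] (v w : n → ℝ) :
    |v ⬝ᵥ w| ≤ eucNorm v * eucNorm w := by
  rw [dotProduct_eq_inner]
  exact abs_real_inner_le_norm _ _

lemma dotProduct_self_eq_sq {n : Type*} [Fintype n] (v : n → ℝ) :
    v ⬝ᵥ v = eucNorm v ^ 2 := by
  rw [dotProduct_eq_inner, eucNorm, real_inner_self_eq_norm_sq]

lemma dotProduct_mulVec_swap {n : Type*} [Fintype n] (Q : Matrix n n ℝ) (x y : n → ℝ) :
    x ⬝ᵥ (Q *ᵥ y) = y ⬝ᵥ (Qᵀ *ᵥ x) := by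
  rw [Matrix.dotProduct_mulVec, ← Matrix.mulVec_transpose, dotProduct_comm]

lemma decay_bound (f f' : ℝ → ℝ) (R : ℝ)
    (hf : ∀ t ≥ (0:ℝ), HasDerivAt f (f' t) t)
    (hdec : ∀ t ≥ (0:ℝ), R < f t → f' t < 0) :
    ∀ t ≥ (0:ℝ), f t ≤ max (f 0) R := by
  intro t ht
  by_contra hcon
  push_neg at hcon
  set K := max (f 0) R with hK
  have hf0 : f 0 ≤ K := le_max_left _ _
  have htpos : 0 < t := by
    rcases lt_or_eq_of_le ht with h | h
    · exact h
    · exact absurd hf0 (not_le.mpr (h ▸ hcon))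
  have hcont : ContinuousOn f (Set.Icc 0 t) := fun u hu =>
    ((hf u hu.1).continuousAt).continuousWithinAt
  set S : Set ℝ := Set.Icc 0 t ∩ f ⁻¹' (Set.Iic K) with hS
  have hS0 : (0:ℝ) ∈ S := ⟨⟨le_refl _, le_of_lt htpos⟩, hf0⟩
  have hclosed : IsClosed S :=
    hcont.preimage_isClosed_of_isClosed isClosed_Icc isClosed_Iic
  have hScomp : IsCompact S :=
    isCompact_Icc.of_isClosed_subset hclosed Set.inter_subset_left
  set s := sSup S with hs
  have hsmem : s ∈ S := hScomp.sSup_mem ⟨0, hS0⟩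
  have hsle : s ≤ t := hsmem.1.2
  have hs0 : 0 ≤ s := hsmem.1.1
  have hfs : f s ≤ K := hsmem.2
  have hst : s < t := by
    rcases lt_or_eq_of_le hsle with h | h
    · exact h
    · exact absurd (h ▸ hfs) (not_le.mpr hcon)
  have hgt : ∀ u ∈ Set.Ioc s t, K < f u := by
    intro u hu
    by_contra hle
    push_neg at hle
    have : u ∈ S := ⟨⟨le_trans hs0 (le_of_lt hu.1), hu.2⟩, hle⟩
    exact absurd (le_csSup (hScomp.bddAbove) this) (not_le.mpr hu.1)
  obtain ⟨c, hc, hslope⟩ := exists_hasDerivAt_eq_slope f f' hst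
    (hcont.mono (Set.Icc_subset_Icc hs0 (le_refl _)))
    (fun u hu => hf u (le_trans hs0 (le_of_lt hu.1)))
  have hc0 : 0 ≤ c := le_trans hs0 (le_of_lt hc.1)
  have hfc : K < f c := hgt c ⟨hc.1, le_of_lt hc.2⟩
  have hneg : f' c < 0 := hdec c hc0 (lt_of_le_of_lt (le_max_right (f 0) R) hfc)
  rw [hslope] at hneg
  have : f t - f s < 0 := by
    have := (div_neg_iff.mp hneg)
    rcases this with ⟨h1, h2⟩ | ⟨h1, h2⟩
    · exact absurd h2 (not_lt.mpr (le_of_lt (sub_pos.mpr hst)))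
    · exact h1
  linarith [hcon]

lemma posdef_lower {n : Type*} [Fintype n] [DecidableEq n] [Nonempty n]
    (P : Matrix n n ℝ) (hP : P.PosDef) :
    ∃ c > 0, ∀ v : n → ℝ, c * eucNorm v ^ 2 ≤ v ⬝ᵥ (P *ᵥ v) := by
  set e : EuclideanSpace ℝ n ≃L[ℝ] (n → ℝ) := EuclideanSpace.equiv n ℝ with he
  set q : EuclideanSpace ℝ n → ℝ := fun x => (e x) ⬝ᵥ (P *ᵥ (e x)) with hq
  have hcont : Continuous q := by
    unfold q
    simp only [dotProduct, Matrix.mulVec]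
    fun_prop
  have hsphere : IsCompact (Metric.sphere (0 : EuclideanSpace ℝ n) 1) := isCompact_sphere _ _
  have hne : (Metric.sphere (0 : EuclideanSpace ℝ n) 1).Nonempty :=
    NormedSpace.sphere_nonempty.mpr zero_le_one
  obtain ⟨x₀, hx₀mem, hx₀min⟩ := hsphere.exists_isMinOn hne hcont.continuousOn
  set c := q x₀ with hc
  have hx₀ne : e x₀ ≠ 0 := by
    intro hzero
    have : x₀ = 0 := by
      apply e.injective
      simpa using hzero
    rw [this] at hx₀mem
    simp at hx₀mem
  have hcpos : 0 < c := by
    have := hP.dotProduct_mulVec_pos hx₀ne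
    simpa [hc, hq] using this
  refine ⟨c, hcpos, fun v => ?_⟩
  by_cases hv : v = 0
  · simp [hv, eucNorm]
  · set x := e.symm v with hx
    have hxne : x ≠ 0 := by
      intro hzero
      apply hv
      have := congrArg e hzero
      simpa [hx] using this
    set r := ‖x‖ with hr
    have hrpos : 0 < r := norm_pos_iff.mpr hxne
    set u := r⁻¹ • x with hu
    have humem : u ∈ Metric.sphere (0 : EuclideanSpace ℝ n) 1 := by
      simp only [hu, mem_sphere_iff_norm, sub_zero, norm_smul, Real.norm_eq_abs]
      rw [abs_of_pos (inv_pos.mpr hrpos)]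
      exact inv_mul_cancel₀ (ne_of_gt hrpos)
    have hqu : c ≤ q u := hx₀min humem
    have hqscale : q u = r⁻¹ ^ 2 * (v ⬝ᵥ (P *ᵥ v)) := by
      have hev : e x = v := by simp [hx]
      have heu : e u = r⁻¹ • v := by rw [hu, _root_.map_smul, hev]
      simp only [hq, heu]
      rw [smul_dotProduct, Matrix.mulVec_smul, dotProduct_smul]
      simp only [smul_eq_mul]
      ring
    have heucv : eucNorm v = r := rfl
    rw [heucv]
    calc c * r ^ 2 = r ^ 2 * c := by ring
    _ ≤ r ^ 2 * q u := by nlinarith [pow_pos hrpos 2]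
    _ = v ⬝ᵥ (P *ᵥ v) := by
        rw [hqscale]
        field_simp

lemma hasDerivAt_quadForm {n : Type*} [Fintype n] (P : Matrix n n ℝ)
    (η : ℝ → n → ℝ) (w : n → ℝ) (t : ℝ) (hη : HasDerivAt η w t) :
    HasDerivAt (fun s => η s ⬝ᵥ (P *ᵥ η s))
      (w ⬝ᵥ (P *ᵥ η t) + η t ⬝ᵥ (P *ᵥ w)) t := by
  have hc : ∀ i, HasDerivAt (fun s => η s i) (w i) t := fun i => hasDerivAt_pi.mp hη i
  have key : HasDerivAt (fun s => ∑ i, ∑ j, η s i * (P i j * η s j))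
      (∑ i, ∑ j, (w i * (P i j * η t j) + η t i * (P i j * w j))) t := by
    apply HasDerivAt.fun_sum
    intro i _
    apply HasDerivAt.fun_sum
    intro j _
    exact (hc i).mul ((hc j).const_mul (P i j))
  have heq : (fun s => η s ⬝ᵥ (P *ᵥ η s)) = fun s => ∑ i, ∑ j, η s i * (P i j * η s j) := by
    funext s
    simp [dotProduct, Matrix.mulVec, Finset.mul_sum]
  rw [heq]
  convert key using 1
  simp [dotProduct, Matrix.mulVec, Finset.mul_sum, Finset.sum_add_distrib]

/- ######################## main theorem ######################## -/

/-- Theorem 2: for the adaptive ESO error dynamics with bounded lumped disturbance `x₃`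
(with bounded rate `h`), bounded input mismatch `g`, bounded regressor `B`, and bounded
parameter-estimation error `θ̃` (from the projection-based adaptation law), the scaled
state-estimation error `η` remains bounded. -/
theorem stmt13 (k m : ℕ) (hk : 1 ≤ k) (hm : 1 ≤ m) (ω₀ : ℝ) (hω : 0 < ω₀)
    (P : Matrix (Fin 3 × Fin k) (Fin 3 × Fin k) ℝ) (hP : P.PosDef) (hPsymm : Pᵀ = P)
    (hlyap : (M ⊗ₖ (1 : Matrix (Fin k) (Fin k) ℝ))ᵀ * P +
      P * (M ⊗ₖ (1 : Matrix (Fin k) (Fin k) ℝ)) = -1)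
    (Γ : Matrix (Fin m) (Fin m) ℝ) (hΓ : Γ.PosDef) (hΓsymm : Γᵀ = Γ)
    (η : ℝ → Fin 3 × Fin k → ℝ) (θt θt' : ℝ → Fin m → ℝ)
    (B : ℝ → Matrix (Fin k) (Fin m) ℝ) (g h x₃ : ℝ → Fin k → ℝ)
    (ub hb eb db θb : ℝ)
    (hη : ∀ t ≥ (0 : ℝ),
      HasDerivAt η (ω₀ • ((M ⊗ₖ (1 : Matrix (Fin k) (Fin k) ℝ)) *ᵥ η t) +
        (1 / ω₀) • (C1 k *ᵥ (g t + B t *ᵥ θt t)) + (1 / ω₀ ^ 2) • (C2 k *ᵥ h t)) t)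
    (hθd : ∀ t ≥ (0 : ℝ), HasDerivAt θt (θt' t) t)
    (hadapt : ∀ t ≥ (0 : ℝ),
      θt t ⬝ᵥ (Γ⁻¹ *ᵥ θt' t +
        (1 / ω₀) • ((B t)ᵀ *ᵥ ((C1 k)ᵀ *ᵥ
          (P *ᵥ (η t - (1 / ω₀ ^ 2) • (C2 k *ᵥ x₃ t)))))) ≤ 0)
    (hg : ∀ t ≥ (0 : ℝ), eucNorm (g t) ≤ ub)
    (hh : ∀ t ≥ (0 : ℝ), eucNorm (h t) ≤ hb)
    (hB : ∀ t ≥ (0 : ℝ), opNorm (B t) ≤ eb)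
    (hx₃ : ∀ t ≥ (0 : ℝ), eucNorm (x₃ t) ≤ db)
    (hθb : ∀ t ≥ (0 : ℝ), eucNorm (θt t) ≤ θb) :
    ∃ C : ℝ, 0 ≤ C ∧ ∀ t ≥ (0 : ℝ), eucNorm (η t) ≤ C := by
  haveI : Nonempty (Fin k) := ⟨⟨0, hk⟩⟩
  set A : Matrix (Fin 3 × Fin k) (Fin 3 × Fin k) ℝ :=
    M ⊗ₖ (1 : Matrix (Fin k) (Fin k) ℝ) with hA
  set w : ℝ → Fin 3 × Fin k → ℝ := fun t =>
    (1 / ω₀) • (C1 k *ᵥ (g t + B t *ᵥ θt t)) + (1 / ω₀ ^ 2) • (C2 k *ᵥ h t) with hw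
  set ηd : ℝ → Fin 3 × Fin k → ℝ := fun t => ω₀ • (A *ᵥ η t) + w t with hηd
  have hη' : ∀ t ≥ (0:ℝ), HasDerivAt η (ηd t) t := by
    intro t ht
    have h1 := hη t ht
    rw [add_assoc] at h1
    exact h1
  -- nonnegativity of bounds
  have hub0 : 0 ≤ ub := le_trans (eucNorm_nonneg _) (hg 0 le_rfl)
  have hhb0 : 0 ≤ hb := le_trans (eucNorm_nonneg _) (hh 0 le_rfl)
  have heb0 : 0 ≤ eb := le_trans (opNorm_nonneg _) (hB 0 le_rfl)
  have hθb0 : 0 ≤ θb := le_trans (eucNorm_nonneg _) (hθb 0 le_rfl)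
  -- bound on perturbation
  set W : ℝ := (1/ω₀) * (opNorm (C1 k) * (ub + eb * θb)) +
      (1/ω₀^2) * (opNorm (C2 k) * hb) with hW
  have hwb : ∀ t ≥ (0:ℝ), eucNorm (w t) ≤ W := by
    intro t ht
    have h1 : eucNorm (C1 k *ᵥ (g t + B t *ᵥ θt t)) ≤ opNorm (C1 k) * (ub + eb * θb) := by
      refine le_trans (mulVec_eucNorm_le _ _) ?_
      refine mul_le_mul_of_nonneg_left ?_ (opNorm_nonneg _)
      refine le_trans (eucNorm_add_le _ _) ?_
      have h2 : eucNorm (B t *ᵥ θt t) ≤ eb * θb :=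
        le_trans (mulVec_eucNorm_le _ _)
          (mul_le_mul (hB t ht) (hθb t ht) (eucNorm_nonneg _) heb0)
      exact add_le_add (hg t ht) h2
    have h3 : eucNorm (C2 k *ᵥ h t) ≤ opNorm (C2 k) * hb :=
      le_trans (mulVec_eucNorm_le _ _) (mul_le_mul_of_nonneg_left (hh t ht) (opNorm_nonneg _))
    calc eucNorm (w t)
        ≤ eucNorm ((1/ω₀) • (C1 k *ᵥ (g t + B t *ᵥ θt t))) +
          eucNorm ((1/ω₀^2) • (C2 k *ᵥ h t)) := eucNorm_add_le _ _
      _ = (1/ω₀) * eucNorm (C1 k *ᵥ (g t + B t *ᵥ θt t)) +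
          (1/ω₀^2) * eucNorm (C2 k *ᵥ h t) := by
          rw [eucNorm_smul, eucNorm_smul, abs_of_pos (by positivity),
            abs_of_pos (by positivity)]
      _ ≤ W := by
          rw [hW]
          have p1 : (0:ℝ) ≤ 1/ω₀ := by positivity
          have p2 : (0:ℝ) ≤ 1/ω₀^2 := by positivity
          exact add_le_add (mul_le_mul_of_nonneg_left h1 p1) (mul_le_mul_of_nonneg_left h3 p2)
  have hW0 : 0 ≤ W := le_trans (eucNorm_nonneg _) (hwb 0 le_rfl)
  -- constants
  set pb : ℝ := opNorm P + 1 with hpb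
  have hpb0 : 0 < pb := by have := opNorm_nonneg P; linarith
  set a : ℝ := pb * W with ha
  have ha0 : 0 ≤ a := mul_nonneg (le_of_lt hpb0) hW0
  set R : ℝ := pb * (2*a/ω₀ + 1)^2 with hR
  -- Lyapunov function
  set V : ℝ → ℝ := fun t => η t ⬝ᵥ (P *ᵥ η t) with hV
  set V' : ℝ → ℝ := fun t => ηd t ⬝ᵥ (P *ᵥ η t) + η t ⬝ᵥ (P *ᵥ ηd t) with hV'
  have hVd : ∀ t ≥ (0:ℝ), HasDerivAt V (V' t) t := fun t ht =>
    hasDerivAt_quadForm P η (ηd t) t (hη' t ht)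
  obtain ⟨c, hc, hlow⟩ := posdef_lower P hP
  -- symmetry of the P-form
  have hsymm_dot : ∀ x y : Fin 3 × Fin k → ℝ, x ⬝ᵥ (P *ᵥ y) = y ⬝ᵥ (P *ᵥ x) := by
    intro x y
    rw [dotProduct_mulVec_swap, hPsymm]
  -- key derivative formula
  have hVform : ∀ t, V' t = -(ω₀ * eucNorm (η t)^2) + 2 * (η t ⬝ᵥ (P *ᵥ w t)) := by
    intro t
    have e1 : V' t = 2 * (η t ⬝ᵥ (P *ᵥ ηd t)) := by
      simp only [hV']
      rw [hsymm_dot (ηd t) (η t)]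
      ring
    have e2 : η t ⬝ᵥ (P *ᵥ ηd t) =
        ω₀ * (η t ⬝ᵥ (P *ᵥ (A *ᵥ η t))) + η t ⬝ᵥ (P *ᵥ w t) := by
      simp only [hηd]
      rw [Matrix.mulVec_add, dotProduct_add, Matrix.mulVec_smul,
        dotProduct_smul, smul_eq_mul]
    have e3 : 2 * (η t ⬝ᵥ (P *ᵥ (A *ᵥ η t))) = -(eucNorm (η t)^2) := by
      have hPA : η t ⬝ᵥ (P *ᵥ (A *ᵥ η t)) = η t ⬝ᵥ ((P * A) *ᵥ η t) := by
        rw [← Matrix.mulVec_mulVec]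
      have hAtP : η t ⬝ᵥ ((Aᵀ * P) *ᵥ η t) = η t ⬝ᵥ ((P * A) *ᵥ η t) := by
        rw [dotProduct_mulVec_swap]
        congr 1
        rw [Matrix.transpose_mul, Matrix.transpose_transpose, hPsymm]
      have hsum : η t ⬝ᵥ ((Aᵀ * P + P * A) *ᵥ η t) = -(η t ⬝ᵥ η t) := by
        rw [hlyap]
        rw [Matrix.neg_mulVec, Matrix.one_mulVec, dotProduct_neg]
      rw [Matrix.add_mulVec, dotProduct_add, hAtP] at hsum
      rw [hPA]
      rw [dotProduct_self_eq_sq] at hsum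
      linarith
    rw [e1, e2]
    linear_combination ω₀ * e3
  -- decay condition
  have hdec : ∀ t ≥ (0:ℝ), R < V t → V' t < 0 := by
    intro t ht hRV
    set N := eucNorm (η t) with hN
    have hN0 : 0 ≤ N := eucNorm_nonneg _
    -- upper bound on V
    have hVub : V t ≤ pb * N^2 := by
      have h1 : V t ≤ |V t| := le_abs_self _
      have h2 : |V t| ≤ N * (opNorm P * N) := by
        refine le_trans (abs_dotProduct_le _ _) ?_
        exact mul_le_mul_of_nonneg_left (mulVec_eucNorm_le _ _) hN0
      have h3 : opNorm P ≤ pb := by rw [hpb]; linarith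
      nlinarith [opNorm_nonneg P]
    have hNlarge : 2*a/ω₀ + 1 < N := by
      have h4 : pb * (2*a/ω₀ + 1)^2 < pb * N^2 := lt_of_lt_of_le hRV hVub
      have h5 : (2*a/ω₀ + 1)^2 < N^2 := by
        exact lt_of_mul_lt_mul_left h4 (le_of_lt hpb0)
      exact lt_of_pow_lt_pow_left₀ 2 hN0 h5
    have hNpos : 0 < N := by
      have : (0:ℝ) ≤ 2*a/ω₀ := by positivity
      linarith
    -- bound the cross term
    have hcross : η t ⬝ᵥ (P *ᵥ w t) ≤ a * N := by
      refine le_trans (le_abs_self _) (le_trans (abs_dotProduct_le _ _) ?_)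
      have h6 : eucNorm (P *ᵥ w t) ≤ opNorm P * eucNorm (w t) := mulVec_eucNorm_le _ _
      have h7 : opNorm P * eucNorm (w t) ≤ pb * W := by
        have := hwb t ht
        have h3 : opNorm P ≤ pb := by rw [hpb]; linarith
        nlinarith [opNorm_nonneg P, eucNorm_nonneg (w t)]
      calc N * eucNorm (P *ᵥ w t) ≤ N * (pb * W) :=
            mul_le_mul_of_nonneg_left (le_trans h6 h7) hN0
        _ = a * N := by rw [ha]; ring
    rw [hVform t]
    have hωN : 2*a + ω₀ < ω₀ * N := by
      have := mul_lt_mul_of_pos_left hNlarge hω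
      calc 2*a + ω₀ = ω₀ * (2*a/ω₀ + 1) := by field_simp
        _ < ω₀ * N := this
    have hc2 : 2 * (η t ⬝ᵥ (P *ᵥ w t)) ≤ 2 * (a * N) := by linarith
    have h10 : (2*a + ω₀) * N < ω₀ * N * N := mul_lt_mul_of_pos_right hωN hNpos
    have hp2 : ω₀ * N^2 = ω₀ * N * N := by ring
    have hωNpos : 0 < ω₀ * N := mul_pos hω hNpos
    rw [hp2]
    linarith [h10, hc2, hωNpos]
  -- conclusion via decay_bound
  have hbnd : ∀ t ≥ (0:ℝ), V t ≤ max (V 0) R := decay_bound V V' R hVd hdec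
  have hR0 : 0 ≤ R := by
    rw [hR]
    positivity
  have hK0 : 0 ≤ max (V 0) R := le_trans hR0 (le_max_right (V 0) R)
  refine ⟨Real.sqrt (max (V 0) R / c), Real.sqrt_nonneg _, fun t ht => ?_⟩
  have h8 : c * eucNorm (η t)^2 ≤ max (V 0) R := le_trans (hlow (η t)) (hbnd t ht)
  have hdiv0 : 0 ≤ max (V 0) R / c := div_nonneg hK0 (le_of_lt hc)
  rw [Real.le_sqrt (eucNorm_nonneg _) hdiv0, le_div_iff₀ hc]
  linarith
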